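/- For every integer k ≥ 6 and every prime power q with q ≥ k−2, there exists a q-divisible [q² + 2q − 1, k, q² − (k−4)q]_q linear code in which the number of codewords of minimum Hamming weight q² − (k−4)q is exactly (q−1)·(C(q, k−4) + C(q, k−3)), where C(a,b) denotes the binomial coefficient. -/

import Mathlib

/-!
Take the words `(a + b x) y + p(x)`, `deg p ≤ r + 1` with `r = k - 4`, at the `q²` affine points
`(x, y)`, together with `b t + [X^{r+1}] p` at `q` further points `t`, and pad with `q - 1` zero
coordinates. If `(a, b) ≠ 0`, each line `x = const` carries `q - 1` nonzeros except at most
one line, and the weight is `q(q - 1)` or `q²`. If `a = b = 0`, the word of `p` has weight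
`q (q - #roots(p) + [deg p = r + 1])`, which attains its minimum `q (q - r)` exactly when
`p = l ∏_{α ∈ s} (X - α)` with `l ≠ 0` and `|s| ∈ {r, r + 1}`.
-/

/-- `C` is an `[n, k, d]_q` linear code over `F`: a `k`-dimensional `F`-linear subspace of
`F^n` such that the minimum Hamming weight of a nonzero codeword equals `d`. -/
def IsLinearCodeWith (F : Type) [Field F] [DecidableEq F] (n k d : ℕ)
    (C : Submodule F (Fin n → F)) : Prop :=
  Module.finrank F C = k ∧
  (∀ c ∈ C, c ≠ 0 → d ≤ hammingNorm c) ∧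
  (∃ c ∈ C, c ≠ 0 ∧ hammingNorm c = d)

open Polynomial Finset

section Hamming

variable {ι κ M : Type*} [Fintype ι] [Fintype κ] [Zero M] [DecidableEq M]

theorem hammingNorm_eq_sum (x : ι → M) : hammingNorm x = ∑ i, if x i ≠ 0 then 1 else 0 := by
  rw [hammingNorm, card_filter]

theorem hammingNorm_sumElim (u : ι → M) (v : κ → M) :
    hammingNorm (Sum.elim u v) = hammingNorm u + hammingNorm v := by
  simp only [hammingNorm_eq_sum]
  exact Fintype.sum_sum_type _

theorem hammingNorm_prod (f : ι × κ → M) :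
    hammingNorm f = ∑ i, hammingNorm fun j => f (i, j) := by
  simp only [hammingNorm_eq_sum, Fintype.sum_prod_type]

theorem hammingNorm_extend_zero {s : ι → κ} (hs : s.Injective) (f : ι → M) :
    hammingNorm (Function.extend s f 0) = hammingNorm f := by
  have : ({j | Function.extend s f 0 j ≠ 0} : Finset κ) =
      ({i | f i ≠ 0} : Finset ι).map ⟨s, hs⟩ := by
    ext j
    by_cases hj : ∃ i, s i = j
    · obtain ⟨i, rfl⟩ := hj
      simp [hs.extend_apply]
    · simp only [mem_filter, mem_univ, true_and, Function.extend_apply' _ _ _ hj, mem_map,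
        Pi.zero_apply, ne_eq, not_true_eq_false, false_iff, not_exists, not_and]
      exact fun i _ hi => hj ⟨i, hi⟩
  rw [hammingNorm, this, card_map, hammingNorm]

theorem hammingNorm_const (v : M) :
    hammingNorm (fun _ : ι => v) = if v = 0 then 0 else Fintype.card ι := by
  split_ifs with hv
  · simp [hv, hammingNorm]
  · simp [hammingNorm, hv]

end Hamming

theorem hammingNorm_affine_of_ne_zero {F : Type*} [Field F] [Fintype F] [DecidableEq F] {u : F}
    (hu : u ≠ 0) (v : F) : hammingNorm (fun y => u * y + v) = Fintype.card F - 1 := by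
  have : ({y | u * y + v ≠ 0} : Finset F) = univ.erase (-v / u) := by
    ext y
    simp only [mem_filter, mem_univ, true_and, mem_erase, and_true, ne_eq]
    rw [eq_div_iff hu]
    constructor <;> intro h <;> contrapose! h <;> linear_combination h
  rw [hammingNorm, this, card_erase_of_mem (mem_univ _), card_univ]

namespace Polynomial

theorem mem_degreeLT_succ_iff {R : Type*} [Semiring R] {p : R[X]} {n : ℕ} :
    p ∈ degreeLT R (n + 1) ↔ p.natDegree ≤ n := by
  rw [degreeLT_succ_eq_degreeLE, mem_degreeLE, natDegree_le_iff_degree_le]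

theorem coeff_eq_zero_iff_natDegree_ne {R : Type*} [Semiring R] {p : R[X]} {n : ℕ}
    (hp : p ∈ degreeLT R (n + 1)) (hp0 : p ≠ 0) : p.coeff n = 0 ↔ p.natDegree ≠ n := by
  have hdeg : p.natDegree ≤ n := mem_degreeLT_succ_iff.mp hp
  constructor
  · rintro hc rfl
    exact hp0 (leadingCoeff_eq_zero.mp hc)
  · exact fun h => coeff_eq_zero_of_natDegree_lt (lt_of_le_of_ne hdeg h)

variable {F : Type*} [Field F]

theorem leadingCoeff_C_mul_prod_X_sub_C (l : F) (s : Finset F) :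
    (C l * ∏ α ∈ s, (X - C α)).leadingCoeff = l := by
  have hmonic : (∏ α ∈ s, (X - C α)).Monic := monic_prod_X_sub_C (fun α => α) s
  rw [leadingCoeff_mul, leadingCoeff_C, hmonic.leadingCoeff, mul_one]

theorem roots_C_mul_prod_X_sub_C {l : F} (hl : l ≠ 0) (s : Finset F) :
    (C l * ∏ α ∈ s, (X - C α)).roots = s.val := by
  rw [roots_C_mul _ hl, roots_prod_X_sub_C]

variable [DecidableEq F]

theorem card_roots_toFinset_le_natDegree (p : F[X]) : #p.roots.toFinset ≤ p.natDegree :=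
  (Multiset.toFinset_card_le _).trans (card_roots' _)

variable [Fintype F]

theorem card_filter_eval_ne_zero {p : F[X]} (hp : p ≠ 0) :
    #{x | p.eval x ≠ 0} = Fintype.card F - #p.roots.toFinset := by
  have hroots : ({x | p.eval x = 0} : Finset F) = p.roots.toFinset := by
    ext x
    simp [mem_roots hp]
  rw [← hroots, ← card_univ_sdiff, filter_not]

variable (F) in
def splitDistinct (n : ℕ) : Set F[X] :=
  {p | p ≠ 0 ∧ p.natDegree = n ∧ #p.roots.toFinset = n}

theorem splitDistinct_eq_image (n : ℕ) :
    splitDistinct F n = (fun ls : F × Finset F => C ls.1 * ∏ α ∈ ls.2, (X - C α)) ''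
      ((univ.erase 0 ×ˢ univ.powersetCard n : Finset (F × Finset F)) : Set (F × Finset F)) := by
  ext p
  simp only [splitDistinct, Set.mem_ofPred_eq, coe_product, Set.mem_image, Set.mem_prod, mem_coe,
    mem_erase, mem_univ, and_true, mem_powersetCard, subset_univ, true_and, Prod.exists]
  constructor
  · rintro ⟨hp, hdeg, hcard⟩
    have hcard' : Multiset.card p.roots = p.natDegree :=
      le_antisymm (card_roots' p) (hdeg ▸ hcard ▸ Multiset.toFinset_card_le _)
    have hnodup : p.roots.Nodup :=
      Multiset.toFinset_card_eq_card_iff_nodup.mp (by omega)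
    refine ⟨p.leadingCoeff, p.roots.toFinset, ⟨leadingCoeff_ne_zero.mpr hp, hcard⟩, ?_⟩
    conv_rhs => rw [← C_leadingCoeff_mul_prod_multiset_X_sub_C hcard']
    rw [prod_eq_multiset_prod, Multiset.toFinset_val, hnodup.dedup]
  · rintro ⟨l, s, ⟨hl, rfl⟩, rfl⟩
    have hmonic : (∏ α ∈ s, (X - C α)).Monic := monic_prod_X_sub_C (fun α => α) s
    refine ⟨mul_ne_zero (C_ne_zero.mpr hl) hmonic.ne_zero, ?_, ?_⟩
    · rw [natDegree_C_mul hl, natDegree_finsetProd_X_sub_C_eq_card]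
    · rw [roots_C_mul_prod_X_sub_C hl, s.val_toFinset]

theorem finite_splitDistinct (n : ℕ) : (splitDistinct F n).Finite := by
  rw [splitDistinct_eq_image]
  exact Set.toFinite _

theorem ncard_splitDistinct (n : ℕ) :
    (splitDistinct F n).ncard = (Fintype.card F - 1) * (Fintype.card F).choose n := by
  rw [splitDistinct_eq_image, Set.InjOn.ncard_image, Set.ncard_coe_finset, card_product,
    card_erase_of_mem (mem_univ _), card_powersetCard, card_univ]
  rintro ⟨l, s⟩ hls ⟨l', s'⟩ hls' heq
  simp only [coe_product, Set.mem_prod, mem_coe, mem_erase, mem_univ, and_true] at hls hls' heq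
  refine Prod.ext ?_ (val_inj.mp ?_)
  · rw [← leadingCoeff_C_mul_prod_X_sub_C l s, heq, leadingCoeff_C_mul_prod_X_sub_C]
  · rw [← roots_C_mul_prod_X_sub_C hls.1, heq, roots_C_mul_prod_X_sub_C hls'.1]

end Polynomial

section Encoding

variable {F : Type*} [Field F] (r : ℕ)

/-- The `q` coordinates `t ↦ b t + [X^{r+1}] p` make all weights divisible by `q`: they add
`q - 1` to the weight when `b ≠ 0` and `q` when `deg p = r + 1`. -/
def encode : F × F × degreeLT F (r + 2) →ₗ[F] ((F × F) ⊕ F → F) where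
  toFun v := Sum.elim (fun xy => (v.1 + v.2.1 * xy.1) * xy.2 + (v.2.2 : F[X]).eval xy.1)
    (fun t => v.2.1 * t + (v.2.2 : F[X]).coeff (r + 1))
  map_add' v w := by
    ext (xy | t)
    · simp only [Prod.fst_add, Prod.snd_add, Submodule.coe_add, eval_add, Sum.elim_inl,
        Pi.add_apply]
      ring
    · simp only [Prod.snd_add, Prod.fst_add, Submodule.coe_add, coeff_add, Sum.elim_inr,
        Pi.add_apply]
      ring
  map_smul' c v := by
    ext (xy | t)
    · simp only [Prod.smul_fst, Prod.smul_snd, Submodule.coe_smul, eval_smul, smul_eq_mul,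
        Sum.elim_inl, RingHom.id_apply, Pi.smul_apply]
      ring
    · simp only [Prod.smul_snd, Prod.smul_fst, Submodule.coe_smul, coeff_smul, smul_eq_mul,
        Sum.elim_inr, RingHom.id_apply, Pi.smul_apply]
      ring

theorem finrank_prod_prod_degreeLT (n : ℕ) :
    Module.finrank F (F × F × degreeLT F n) = n + 2 := by
  rw [Module.finrank_prod, Module.finrank_prod, Module.finrank_self,
    (degreeLTEquiv F n).finrank_eq, Module.finrank_fin_fun]
  ring

theorem encode_zero_zero_of_coe_eq_zero {p : degreeLT F (r + 2)} (hp : (p : F[X]) = 0) :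
    encode r (0, 0, p) = 0 := by
  rw [show p = 0 from Subtype.ext hp]
  exact map_zero (encode r)

variable [Fintype F] [DecidableEq F]

theorem hammingNorm_encode (a b : F) (p : degreeLT F (r + 2)) :
    hammingNorm (encode r (a, b, p)) =
      ∑ x, hammingNorm (fun y => (a + b * x) * y + (p : F[X]).eval x) +
        hammingNorm (fun t => b * t + (p : F[X]).coeff (r + 1)) := by
  rw [encode, LinearMap.coe_mk, AddHom.coe_mk, hammingNorm_sumElim, hammingNorm_prod]

theorem hammingNorm_encode_of_ne_zero {a b : F} (hab : (a, b) ≠ 0) (p : degreeLT F (r + 2)) :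
    hammingNorm (encode r (a, b, p)) = Fintype.card F * (Fintype.card F - 1) ∨
      hammingNorm (encode r (a, b, p)) = Fintype.card F * Fintype.card F := by
  obtain ⟨m, hm⟩ := Nat.exists_eq_add_one.mpr (Fintype.card_pos (α := F))
  suffices ∃ c : F,
      hammingNorm (encode r (a, b, p)) = (m + 1) * m + hammingNorm (fun _ : F => c) by
    obtain ⟨c, hc⟩ := this
    rw [hc, hammingNorm_const, hm, Nat.add_sub_cancel]
    split_ifs
    · exact Or.inl rfl
    · exact Or.inr (by ring)
  rw [hammingNorm_encode]
  by_cases hb : b = 0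
  · have ha : a ≠ 0 := by simpa [hb] using hab
    refine ⟨(p : F[X]).coeff (r + 1), ?_⟩
    simp only [hb, zero_mul, add_zero, zero_add, hammingNorm_affine_of_ne_zero ha, sum_const,
      card_univ, smul_eq_mul, hm, Nat.add_sub_cancel]
  · have hroot : a + b * (-a / b) = 0 := by rw [mul_div_cancel₀ _ hb, add_neg_cancel]
    have hline : ∀ x ∈ univ.erase (-a / b),
        hammingNorm (fun y => (a + b * x) * y + (p : F[X]).eval x) = Fintype.card F - 1 := by
      refine fun x hx => hammingNorm_affine_of_ne_zero (fun h => ne_of_mem_erase hx ?_) _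
      rw [eq_div_iff hb]
      linear_combination h
    refine ⟨(p : F[X]).eval (-a / b), ?_⟩
    rw [← add_sum_erase _ _ (mem_univ (-a / b)), sum_congr rfl hline, hroot]
    simp only [zero_mul, zero_add, hammingNorm_affine_of_ne_zero hb, sum_const, smul_eq_mul,
      card_erase_of_mem (mem_univ _), card_univ, hm, Nat.add_sub_cancel]
    ring

theorem hammingNorm_encode_zero_zero {p : degreeLT F (r + 2)} (hp : (p : F[X]) ≠ 0) :
    hammingNorm (encode r (0, 0, p)) = Fintype.card F * (Fintype.card F -
      #(p : F[X]).roots.toFinset + if (p : F[X]).natDegree = r + 1 then 1 else 0) := by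
  rw [hammingNorm_encode]
  simp only [zero_mul, add_zero, zero_add, hammingNorm_const, sum_ite, sum_const_zero, sum_const,
    smul_eq_mul, coeff_eq_zero_iff_natDegree_ne p.2 hp, ite_not, ← ne_eq,
    card_filter_eval_ne_zero hp]
  split_ifs <;> ring

theorem dvd_hammingNorm_encode (v : F × F × degreeLT F (r + 2)) :
    Fintype.card F ∣ hammingNorm (encode r v) := by
  obtain ⟨a, b, p⟩ := v
  by_cases hab : (a, b) = 0
  · obtain ⟨rfl, rfl⟩ := Prod.mk_eq_zero.mp hab
    by_cases hp : (p : F[X]) = 0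
    · rw [encode_zero_zero_of_coe_eq_zero r hp, hammingNorm_zero]
      exact dvd_zero _
    · rw [hammingNorm_encode_zero_zero r hp]
      exact dvd_mul_right _ _
  · rcases hammingNorm_encode_of_ne_zero r hab p with h | h <;> rw [h] <;> exact dvd_mul_right _ _

theorem card_mul_sub_le_hammingNorm_encode (hr : 1 ≤ r) {v : F × F × degreeLT F (r + 2)}
    (hv : v ≠ 0) : Fintype.card F * (Fintype.card F - r) ≤ hammingNorm (encode r v) := by
  obtain ⟨a, b, p⟩ := v
  by_cases hab : (a, b) = 0
  · obtain ⟨rfl, rfl⟩ := Prod.mk_eq_zero.mp hab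
    have hp : (p : F[X]) ≠ 0 := fun hp => hv (by rw [show p = 0 from Subtype.ext hp]; rfl)
    have hroots := card_roots_toFinset_le_natDegree (p : F[X])
    have hdeg : (p : F[X]).natDegree ≤ r + 1 := mem_degreeLT_succ_iff.mp p.2
    rw [hammingNorm_encode_zero_zero r hp]
    refine Nat.mul_le_mul_left _ ?_
    split_ifs <;> omega
  · rcases hammingNorm_encode_of_ne_zero r hab p with h | h <;> rw [h] <;>
      exact Nat.mul_le_mul_left _ (by omega)

theorem hammingNorm_encode_eq_iff (hr : 2 ≤ r) (hrq : r < Fintype.card F)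
    (v : F × F × degreeLT F (r + 2)) :
    hammingNorm (encode r v) = Fintype.card F * (Fintype.card F - r) ↔
      v.1 = 0 ∧ v.2.1 = 0 ∧
        (v.2.2 : F[X]) ∈ splitDistinct F r ∪ splitDistinct F (r + 1) := by
  obtain ⟨a, b, p⟩ := v
  have hq : 0 < Fintype.card F := Fintype.card_pos
  by_cases hab : (a, b) = 0
  · obtain ⟨rfl, rfl⟩ := Prod.mk_eq_zero.mp hab
    by_cases hp : (p : F[X]) = 0
    · rw [encode_zero_zero_of_coe_eq_zero r hp, hammingNorm_zero, hp]
      simp only [splitDistinct, Set.mem_union, Set.mem_ofPred_eq, ne_eq, not_true_eq_false,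
        false_and, or_self, and_false, iff_false]
      exact (Nat.mul_pos hq (by omega)).ne
    · have hroots : #(p : F[X]).roots.toFinset ≤ (p : F[X]).natDegree :=
        (Multiset.toFinset_card_le _).trans (card_roots' _)
      have hdeg : (p : F[X]).natDegree ≤ r + 1 := mem_degreeLT_succ_iff.mp p.2
      rw [hammingNorm_encode_zero_zero r hp, Nat.mul_right_inj hq.ne']
      simp only [splitDistinct, Set.mem_union, Set.mem_ofPred_eq, true_and, hp, ne_eq,
        not_false_eq_true]
      split_ifs <;> omega
  · refine iff_of_false ?_ fun h => hab (Prod.mk_eq_zero.mpr ⟨h.1, h.2.1⟩)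
    rcases hammingNorm_encode_of_ne_zero r hab p with h | h <;>
      rw [h, Nat.mul_right_inj hq.ne'] <;> omega

theorem ncard_hammingNorm_encode_eq (hr : 2 ≤ r) (hrq : r < Fintype.card F) :
    {v : F × F × degreeLT F (r + 2) |
        hammingNorm (encode r v) = Fintype.card F * (Fintype.card F - r)}.ncard =
      (Fintype.card F - 1) * ((Fintype.card F).choose r + (Fintype.card F).choose (r + 1)) := by
  have hset : {v : F × F × degreeLT F (r + 2) |
        hammingNorm (encode r v) = Fintype.card F * (Fintype.card F - r)} =
      (fun p => ((0 : F), (0 : F), p)) ''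
        (Subtype.val ⁻¹' (splitDistinct F r ∪ splitDistinct F (r + 1))) := by
    ext ⟨a, b, p⟩
    simp only [Set.mem_ofPred_eq, hammingNorm_encode_eq_iff r hr hrq, Set.mem_image,
      Set.mem_preimage, Prod.mk.injEq]
    grind
  have hsub : splitDistinct F r ∪ splitDistinct F (r + 1) ⊆
      Set.range ((↑) : degreeLT F (r + 2) → F[X]) := by
    rintro p (⟨-, hdeg, -⟩ | ⟨-, hdeg, -⟩) <;>
      exact ⟨⟨p, mem_degreeLT_succ_iff.mpr (by omega)⟩, rfl⟩
  have hdisj : Disjoint (splitDistinct F r) (splitDistinct F (r + 1)) :=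
    Set.disjoint_left.mpr fun p hp hp' => by
      have := hp.2.1.symm.trans hp'.2.1
      omega
  rw [hset, Set.ncard_image_of_injective _ fun p p' h => congrArg (fun v => v.2.2) h,
    Set.ncard_preimage_of_injective_subset_range Subtype.val_injective hsub,
    Set.ncard_union_eq hdisj (finite_splitDistinct r) (finite_splitDistinct (r + 1)),
    ncard_splitDistinct, ncard_splitDistinct, mul_add]

end Encoding

section Codes

theorem LinearMap.ncard_setOf_mem_range_and {R V W : Type*} [Semiring R] [AddCommMonoid V]
    [AddCommMonoid W] [Module R V] [Module R W] {Ψ : V →ₗ[R] W} (hΨ : Function.Injective Ψ)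
    (P : W → Prop) : {c | c ∈ LinearMap.range Ψ ∧ P c}.ncard = {v | P (Ψ v)}.ncard := by
  rw [← Set.ncard_image_of_injective _ hΨ]
  congr 1
  ext c
  simp only [LinearMap.mem_range, Set.mem_ofPred_eq, Set.mem_image]
  constructor
  · rintro ⟨⟨v, rfl⟩, hP⟩
    exact ⟨v, hP, rfl⟩
  · rintro ⟨v, hP, rfl⟩
    exact ⟨⟨v, rfl⟩, hP⟩

variable {F : Type} [Field F] [DecidableEq F] {V ι : Type*} [AddCommGroup V] [Module F V]
  [Fintype ι]

theorem injective_of_le_hammingNorm {d : ℕ} {Ψ : V →ₗ[F] (ι → F)} (hd : 0 < d)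
    (hle : ∀ v, v ≠ 0 → d ≤ hammingNorm (Ψ v)) : Function.Injective Ψ := by
  refine LinearMap.ker_eq_bot.mp (LinearMap.ker_eq_bot'.mpr fun v hv => ?_)
  by_contra hv0
  have := hle v hv0
  rw [hv, hammingNorm_zero] at this
  omega

theorem isLinearCodeWith_range {n d : ℕ} (Ψ : V →ₗ[F] (Fin n → F)) (hd : 0 < d)
    (hle : ∀ v, v ≠ 0 → d ≤ hammingNorm (Ψ v)) (hex : ∃ v, hammingNorm (Ψ v) = d) :
    IsLinearCodeWith F n (Module.finrank F V) d (LinearMap.range Ψ) := by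
  refine ⟨LinearMap.finrank_range_of_inj (injective_of_le_hammingNorm hd hle), ?_, ?_⟩
  · rintro _ ⟨v, rfl⟩ hc
    exact hle v fun hv => hc (by rw [hv, map_zero])
  · obtain ⟨v, hv⟩ := hex
    refine ⟨Ψ v, ⟨v, rfl⟩, fun h => ?_, hv⟩
    rw [h, hammingNorm_zero] at hv
    omega

end Codes

theorem statement5_general (k q : ℕ) (hk : 6 ≤ k) (hkq : k - 2 ≤ q)
    (F : Type) [Field F] [Fintype F] [DecidableEq F] (hF : Fintype.card F = q) :
    ∃ C : Submodule F (Fin (q ^ 2 + 2 * q - 1) → F),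
      IsLinearCodeWith F (q ^ 2 + 2 * q - 1) k (q ^ 2 - (k - 4) * q) C ∧
      (∀ c ∈ C, q ∣ hammingNorm c) ∧
      {c : Fin (q ^ 2 + 2 * q - 1) → F |
          c ∈ C ∧ hammingNorm c = q ^ 2 - (k - 4) * q}.ncard
        = (q - 1) * (Nat.choose q (k - 4) + Nat.choose q (k - 3)) := by
  subst hF
  obtain ⟨r, rfl⟩ : ∃ r, k = r + 4 := ⟨k - 4, by omega⟩
  have hr : 2 ≤ r := by omega
  have hrq : r < Fintype.card F := by omega
  rw [show r + 4 - 4 = r by omega, show r + 4 - 3 = r + 1 by omega,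
    show Fintype.card F ^ 2 - r * Fintype.card F = Fintype.card F * (Fintype.card F - r) by
      rw [Nat.mul_sub, sq, mul_comm r]]
  obtain ⟨e⟩ :
      Nonempty ((F × F) ⊕ F ↪ Fin (Fintype.card F ^ 2 + 2 * Fintype.card F - 1)) :=
    Function.Embedding.nonempty_of_card_le (by
      simp only [Fintype.card_sum, Fintype.card_prod, Fintype.card_fin, sq]
      omega)
  set Ψ := Function.ExtendByZero.linearMap F e ∘ₗ encode r
  have hΨ : ∀ v, hammingNorm (Ψ v) = hammingNorm (encode r v) :=
    fun v => hammingNorm_extend_zero e.injective _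
  have hle : ∀ v, v ≠ 0 → Fintype.card F * (Fintype.card F - r) ≤ hammingNorm (Ψ v) :=
    fun v hv => (hΨ v).symm ▸ card_mul_sub_le_hammingNorm_encode r (by omega) hv
  have hcount := ncard_hammingNorm_encode_eq r hr hrq
  simp only [← hΨ] at hcount
  have hd : 0 < Fintype.card F * (Fintype.card F - r) := Nat.mul_pos Fintype.card_pos (by omega)
  have hq : 0 < Fintype.card F - 1 := by omega
  have hchoose : 0 < (Fintype.card F).choose r := Nat.choose_pos hrq.le
  refine ⟨LinearMap.range Ψ, finrank_prod_prod_degreeLT (F := F) (r + 2) ▸ isLinearCodeWith_range Ψ hd hle ?_, ?_, ?_⟩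
  · exact Set.nonempty_of_ncard_ne_zero (hcount.trans_ne (by positivity))
  · rintro _ ⟨v, rfl⟩
    exact (hΨ v).symm ▸ dvd_hammingNorm_encode r v
  · rw [LinearMap.ncard_setOf_mem_range_and (injective_of_le_hammingNorm hd hle), hcount]

/-- For every integer `k ≥ 6` and every prime power `q ≥ k - 2`, there exists a
`q`-divisible `[q² + 2q - 1, k, q² - (k-4)q]_q` code having exactly
`(q-1)·(C(q, k-4) + C(q, k-3))` codewords of minimum weight `q² - (k-4)q`. -/
theorem statement5 (k q : ℕ) (hk : 6 ≤ k) (hq : IsPrimePow q) (hkq : k - 2 ≤ q)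
    (F : Type) [Field F] [Fintype F] [DecidableEq F] (hF : Fintype.card F = q) :
    ∃ C : Submodule F (Fin (q ^ 2 + 2 * q - 1) → F),
      IsLinearCodeWith F (q ^ 2 + 2 * q - 1) k (q ^ 2 - (k - 4) * q) C ∧
      (∀ c ∈ C, q ∣ hammingNorm c) ∧
      {c : Fin (q ^ 2 + 2 * q - 1) → F |
          c ∈ C ∧ hammingNorm c = q ^ 2 - (k - 4) * q}.ncard
        = (q - 1) * (Nat.choose q (k - 4) + Nat.choose q (k - 3)) :=
  statement5_general k q hk hkq F hF
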